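/- For every natural number n there exist a natural number λ and a function μ : ℤ × ℤ → ℂ with finite support contained in {k = (k₁,k₂) ∈ ℤ² : k₁² + k₂² = λ}, with μ not identically zero, such that for all natural numbers a, b with a + b ≤ n one has ∑_{k ∈ ℤ²} μ(k) · k₁^a · k₂^b = 0. (The homogeneous linear moment system has a nontrivial solution supported on a circle containing sufficiently many lattice points.) -/
import Mathlib


noncomputable section
open Complex Polynomial Finset

namespace MomentAux


def ga : GaussianInt := ⟨2, 1⟩
def gb : GaussianInt := ⟨2, -1⟩

lemma ga_ne : ga ≠ 0 := by decide
lemma gb_ne : gb ≠ 0 := by decide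

lemma star_ga : star ga = gb := by decide

lemma mod5 (d : ℕ) (hd : 1 ≤ d) :
    ((ga ^ d).re % 5 = 2 ∧ (ga ^ d).im % 5 = 1) ∨
    ((ga ^ d).re % 5 = 3 ∧ (ga ^ d).im % 5 = 4) := by
  induction d with
  | zero => omega
  | succ d ih =>
    rcases Nat.eq_zero_or_pos d with h | h
    · subst h; left; constructor <;> rfl
    · have hre : (ga ^ (d + 1)).re = 2 * (ga ^ d).re - (ga ^ d).im := by
        rw [pow_succ, Zsqrtd.re_mul]
        show _ = _
        simp [ga]; ring
      have him : (ga ^ (d + 1)).im = (ga ^ d).re + 2 * (ga ^ d).im := by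
        rw [pow_succ, Zsqrtd.im_mul]
        simp [ga]; ring
      rcases ih h with ⟨h1, h2⟩ | ⟨h1, h2⟩ <;> [right; left] <;> constructor <;> omega

lemma im_ne (d : ℕ) (hd : 1 ≤ d) : (ga ^ d).im ≠ 0 := by
  rcases mod5 d hd with ⟨_, h⟩ | ⟨_, h⟩ <;> omega

lemma pow_ne_pow (d : ℕ) (hd : 1 ≤ d) : gb ^ d ≠ ga ^ d := by
  intro h
  have h2 : (star (ga ^ d)) = ga ^ d := by
    calc star (ga ^ d) = (star ga) ^ d := star_pow ..
      _ = gb ^ d := by rw [star_ga]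
      _ = ga ^ d := h
  have := congrArg Zsqrtd.im h2
  rw [Zsqrtd.im_star] at this
  exact im_ne d hd (by omega)

lemma z_inj {m : ℕ} : ∀ {j j' : ℕ}, j ≤ m → j' ≤ m →
    ga ^ j * gb ^ (m - j) = ga ^ j' * gb ^ (m - j') → j = j' := by
  have key : ∀ {j j' : ℕ}, j ≤ m → j' ≤ m → j < j' →
      ga ^ j * gb ^ (m - j) = ga ^ j' * gb ^ (m - j') → False := by
    intro j j' hj hj' hlt h
    set d := j' - j with hd
    have e1 : m - j = (m - j') + d := by omega
    have e2 : j' = j + d := by omega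
    rw [e1, e2, pow_add, pow_add] at h
    have h' : ga ^ j * gb ^ (m - j') * gb ^ d = ga ^ j * gb ^ (m - j') * (ga ^ d) := by
      rw [show m - j' = m - (j + d) by omega]
      calc ga ^ j * gb ^ (m - (j+d)) * gb ^ d = ga ^ j * (gb ^ (m - (j+d)) * gb ^ d) := by ring
        _ = ga ^ j * ga ^ d * gb ^ (m - (j+d)) := h
        _ = ga ^ j * gb ^ (m - (j+d)) * ga ^ d := by ring
    have hc : gb ^ d = ga ^ d :=
      mul_left_cancel₀ (mul_ne_zero (pow_ne_zero _ ga_ne) (pow_ne_zero _ gb_ne)) h'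
    exact pow_ne_pow d (by omega) hc
  intro j j' hj hj' h
  rcases lt_trichotomy j j' with hlt | he | hgt
  · exact absurd (key hj hj' hlt h) (by simp)
  · exact he
  · exact absurd (key hj' hj hgt h.symm) (by simp)

lemma norm_pow (x : GaussianInt) (k : ℕ) : (x ^ k).norm = x.norm ^ k := by
  induction k with
  | zero => simp [Zsqrtd.norm_one]
  | succ k ih => rw [pow_succ, Zsqrtd.norm_mul, ih, pow_succ]

lemma norm_z {m j : ℕ} (hj : j ≤ m) : (ga ^ j * gb ^ (m - j)).norm = 5 ^ m := by
  rw [Zsqrtd.norm_mul, norm_pow, norm_pow]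
  have h1 : ga.norm = 5 := by decide
  have h2 : gb.norm = 5 := by decide
  rw [h1, h2, ← pow_add]
  congr 1; omega



def A : ℂ := 2 + Complex.I
def B : ℂ := 2 - Complex.I
def w : ℂ := A / B

lemma A_ne : A ≠ 0 := by
  simp only [A, ne_eq, Complex.ext_iff]
  push_neg
  intro h; norm_num at h

lemma B_ne : B ≠ 0 := by
  simp only [B, ne_eq, Complex.ext_iff]
  push_neg
  intro h; norm_num at h

lemma w_zpow (t : ℤ) : w ^ t = A ^ t * B ^ (-t) := by
  rw [w, div_zpow, zpow_neg, div_eq_mul_inv]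

lemma zpow_key {m j : ℕ} (p q : ℕ) (hj : j ≤ m) :
    (A ^ j * B ^ (m - j)) ^ p * (B ^ j * A ^ (m - j)) ^ q
      = A ^ (m * q) * B ^ (m * p) * (w ^ ((p : ℤ) - q)) ^ j := by
  have hmj : ((m - j : ℕ) : ℤ) = (m : ℤ) - j := by omega
  have e1 : ((j * p + (m - j) * q : ℕ) : ℤ) = ((m * q : ℕ) : ℤ) + ((p : ℤ) - q) * (j : ℤ) := by
    push_cast [hmj]; ring
  have e2 : (((m - j) * p + j * q : ℕ) : ℤ) = ((m * p : ℕ) : ℤ) + (-((p : ℤ) - q)) * (j : ℤ) := by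
    push_cast [hmj]; ring
  calc (A ^ j * B ^ (m - j)) ^ p * (B ^ j * A ^ (m - j)) ^ q
      = A ^ (j * p + (m - j) * q) * B ^ ((m - j) * p + j * q) := by
        rw [mul_pow, mul_pow, ← pow_mul, ← pow_mul, ← pow_mul, ← pow_mul,
          pow_add, pow_add]
        ring
    _ = A ^ ((j * p + (m - j) * q : ℕ) : ℤ) * B ^ (((m - j) * p + j * q : ℕ) : ℤ) := by
        rw [zpow_natCast, zpow_natCast]
    _ = (A ^ ((m * q : ℕ) : ℤ) * A ^ (((p : ℤ) - q) * (j : ℤ)))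
        * (B ^ ((m * p : ℕ) : ℤ) * B ^ ((-((p : ℤ) - q)) * (j : ℤ))) := by
        rw [e1, e2, zpow_add₀ A_ne, zpow_add₀ B_ne]
    _ = A ^ (m * q) * B ^ (m * p) * ((A ^ ((p : ℤ) - q) * B ^ (-((p : ℤ) - q))) ^ j) := by
        rw [zpow_natCast, zpow_natCast, zpow_mul, zpow_mul, zpow_natCast, zpow_natCast, mul_pow]
        ring
    _ = A ^ (m * q) * B ^ (m * p) * (w ^ ((p : ℤ) - q)) ^ j := by rw [w_zpow]

def P (n : ℕ) : Polynomial ℂ := ∏ s ∈ Finset.Icc (-(n : ℤ)) (n : ℤ), (X - C (w ^ s))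

lemma P_monic (n : ℕ) : (P n).Monic :=
  monic_prod_of_monic _ _ fun s _ => monic_X_sub_C _

lemma P_natDegree (n : ℕ) : (P n).natDegree = 2 * n + 1 := by
  rw [P, natDegree_prod _ _ fun s _ => X_sub_C_ne_zero _]
  simp only [natDegree_X_sub_C, Finset.sum_const, smul_eq_mul, mul_one]
  rw [Int.card_Icc]
  omega

lemma P_eval (n : ℕ) (t : ℤ) (ht : t ∈ Finset.Icc (-(n : ℤ)) (n : ℤ)) :
    (P n).eval (w ^ t) = 0 := by
  rw [P, eval_prod]
  exact Finset.prod_eq_zero ht (by simp)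

def cc (n j : ℕ) : ℂ := (P n).coeff j

lemma cc_top (n : ℕ) : cc n (2 * n + 1) = 1 := by
  have := (P_monic n).coeff_natDegree
  rwa [P_natDegree] at this

lemma S_eq_zero (n p q : ℕ) (hpq : p + q ≤ n) :
    ∑ j ∈ Finset.range (2 * n + 2),
      cc n j * ((A ^ j * B ^ (2 * n + 1 - j)) ^ p * (B ^ j * A ^ (2 * n + 1 - j)) ^ q) = 0 := by
  set m := 2 * n + 1 with hm
  have hstep : ∀ j ∈ Finset.range (m + 1),
      cc n j * ((A ^ j * B ^ (m - j)) ^ p * (B ^ j * A ^ (m - j)) ^ q)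
        = (A ^ (m * q) * B ^ (m * p)) * (cc n j * (w ^ ((p : ℤ) - q)) ^ j) := by
    intro j hj
    rw [zpow_key p q (by simp at hj; omega)]
    ring
  rw [show (2*n+2) = m + 1 by omega, Finset.sum_congr rfl hstep, ← Finset.mul_sum]
  have he : ∑ j ∈ Finset.range (m + 1), cc n j * (w ^ ((p : ℤ) - q)) ^ j
      = (P n).eval (w ^ ((p : ℤ) - q)) := by
    rw [eval_eq_sum_range' (n := m + 1) (by rw [P_natDegree]; omega)]
    simp [cc]
  rw [he, P_eval n _ (by simp only [Finset.mem_Icc]; omega), mul_zero]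

lemma expand (u v : ℂ) (a b : ℕ) :
    (u + v) ^ a * (u - v) ^ b =
      ∑ i ∈ Finset.range (a + 1), ∑ l ∈ Finset.range (b + 1),
        ((a.choose i : ℂ) * (b.choose l) * (-1) ^ (b - l))
          * (u ^ (i + l) * v ^ ((a - i) + (b - l))) := by
  rw [add_pow, show u - v = u + (-v) by ring, add_pow, Finset.sum_mul_sum]
  refine Finset.sum_congr rfl fun i hi => Finset.sum_congr rfl fun l hl => ?_
  rw [neg_pow, pow_add, pow_add]
  ring

lemma T_eq_zero (n a b : ℕ) (hab : a + b ≤ n) :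
    ∑ j ∈ Finset.range (2 * n + 2), cc n j *
      (((A ^ j * B ^ (2 * n + 1 - j)) + (B ^ j * A ^ (2 * n + 1 - j))) ^ a
        * ((A ^ j * B ^ (2 * n + 1 - j)) - (B ^ j * A ^ (2 * n + 1 - j))) ^ b) = 0 := by
  have h1 : ∀ j ∈ Finset.range (2 * n + 2), cc n j *
      (((A ^ j * B ^ (2 * n + 1 - j)) + (B ^ j * A ^ (2 * n + 1 - j))) ^ a
        * ((A ^ j * B ^ (2 * n + 1 - j)) - (B ^ j * A ^ (2 * n + 1 - j))) ^ b)
      = ∑ i ∈ Finset.range (a + 1), ∑ l ∈ Finset.range (b + 1),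
          ((a.choose i : ℂ) * (b.choose l) * (-1) ^ (b - l))
            * (cc n j * ((A ^ j * B ^ (2 * n + 1 - j)) ^ (i + l)
                * (B ^ j * A ^ (2 * n + 1 - j)) ^ ((a - i) + (b - l)))) := by
    intro j _
    rw [expand, Finset.mul_sum]
    refine Finset.sum_congr rfl fun i _ => ?_
    rw [Finset.mul_sum]
    refine Finset.sum_congr rfl fun l _ => ?_
    ring
  rw [Finset.sum_congr rfl h1, Finset.sum_comm]
  refine Finset.sum_eq_zero fun i hi => ?_
  rw [Finset.sum_comm]
  refine Finset.sum_eq_zero fun l hl => ?_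
  rw [← Finset.mul_sum,
    S_eq_zero n (i + l) ((a - i) + (b - l)) (by simp at hi hl; omega), mul_zero]


end MomentAux

namespace MomentAux

def zg (m j : ℕ) : GaussianInt := ga ^ j * gb ^ (m - j)
def kp (m j : ℕ) : ℤ × ℤ := ((zg m j).re, (zg m j).im)

lemma toComplex_ga : ((ga : GaussianInt) : ℂ) = A := by
  rw [ga, GaussianInt.toComplex_def', A]; push_cast; ring

lemma toComplex_gb : ((gb : GaussianInt) : ℂ) = B := by
  rw [gb, GaussianInt.toComplex_def', B]; push_cast; ring

lemma star_gb : star gb = ga := by decide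

lemma toComplex_zg (m j : ℕ) : ((zg m j : GaussianInt) : ℂ) = A ^ j * B ^ (m - j) := by
  show GaussianInt.toComplex _ = _
  rw [zg, map_mul, map_pow, map_pow]
  rw [show GaussianInt.toComplex ga = A from toComplex_ga,
    show GaussianInt.toComplex gb = B from toComplex_gb]

lemma toComplex_star_zg (m j : ℕ) :
    ((star (zg m j) : GaussianInt) : ℂ) = B ^ j * A ^ (m - j) := by
  show GaussianInt.toComplex _ = _
  rw [zg, star_mul', star_pow, star_pow, star_ga, star_gb, map_mul, map_pow, map_pow]
  rw [show GaussianInt.toComplex gb = B from toComplex_gb,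
    show GaussianInt.toComplex ga = A from toComplex_ga]

lemma sum_star (u : GaussianInt) :
    (u : ℂ) + ((star u : GaussianInt) : ℂ) = 2 * (u.re : ℂ) := by
  rw [GaussianInt.toComplex_def, GaussianInt.toComplex_def, Zsqrtd.re_star, Zsqrtd.im_star]
  push_cast; ring

lemma diff_star (u : GaussianInt) :
    (u : ℂ) - ((star u : GaussianInt) : ℂ) = (2 * Complex.I) * (u.im : ℂ) := by
  rw [GaussianInt.toComplex_def, GaussianInt.toComplex_def, Zsqrtd.re_star, Zsqrtd.im_star]
  push_cast; ring

end MomentAux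

open MomentAux

theorem nontrivial_solution_of_moment_system (n : ℕ) :
    ∃ (lam : ℕ) (μ : ℤ × ℤ → ℂ),
      (Function.support μ).Finite ∧
      Function.support μ ⊆ {k : ℤ × ℤ | k.1 ^ 2 + k.2 ^ 2 = (lam : ℤ)} ∧
      μ ≠ 0 ∧
      ∀ a b : ℕ, a + b ≤ n →
        (∑ᶠ k : ℤ × ℤ, μ k * (k.1 : ℂ) ^ a * (k.2 : ℂ) ^ b) = 0 := by
  classical
  set m : ℕ := 2 * n + 1 with hm
  set μ : ℤ × ℤ → ℂ :=
    fun x => ∑ j ∈ Finset.range (m + 1), if x = kp m j then cc n j else 0 with hμ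
  set S : Finset (ℤ × ℤ) := (Finset.range (m + 1)).image (kp m) with hS
  have hkinj : ∀ j j', j ≤ m → j' ≤ m → kp m j = kp m j' → j = j' := by
    intro j j' hj hj' h
    apply z_inj hj hj'
    have h1 := congrArg Prod.fst h
    have h2 := congrArg Prod.snd h
    exact Zsqrtd.ext h1 h2
  have hsupp : Function.support μ ⊆ ↑S := by
    intro x hx
    rw [Function.mem_support] at hx
    by_contra hxS
    apply hx
    refine Finset.sum_eq_zero fun j hj => ?_
    rw [if_neg]
    intro he
    exact hxS (by rw [he]; exact Finset.mem_coe.2 (Finset.mem_image_of_mem (kp m) hj))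
  refine ⟨5 ^ m, μ, Set.Finite.subset S.finite_toSet hsupp, ?_, ?_, ?_⟩
  · intro x hx
    obtain ⟨j, hj, hje⟩ := Finset.mem_image.mp (hsupp hx)
    subst hje
    show (kp m j).1 ^ 2 + (kp m j).2 ^ 2 = ((5 ^ m : ℕ) : ℤ)
    have hnorm : (zg m j).norm = 5 ^ m := norm_z (by simp at hj; omega)
    rw [Zsqrtd.norm_def] at hnorm
    push_cast
    rw [kp]
    dsimp only
    nlinarith [hnorm]
  · intro h0
    have h1 : μ (kp m m) = cc n m := by
      show (∑ j ∈ Finset.range (m + 1), if kp m m = kp m j then cc n j else 0) = cc n m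
      rw [Finset.sum_eq_single_of_mem m (Finset.self_mem_range_succ m)]
      · rw [if_pos rfl]
      · intro j hj hjm
        rw [if_neg]
        intro he
        exact hjm ((hkinj m j le_rfl (by simp at hj; omega) he).symm)
    rw [h0] at h1
    have : cc n m = 1 := cc_top n
    rw [this] at h1
    exact one_ne_zero h1.symm
  · intro a b hab
    have hsub : Function.support (fun k : ℤ × ℤ => μ k * (k.1 : ℂ) ^ a * (k.2 : ℂ) ^ b) ⊆ ↑S := by
      intro x hx
      apply hsupp
      rw [Function.mem_support] at hx ⊢
      intro h
      exact hx (by rw [h, zero_mul, zero_mul])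
    rw [finsum_eq_sum_of_support_subset _ hsub]
    have hA1 : ∀ x ∈ S, μ x * (x.1 : ℂ) ^ a * (x.2 : ℂ) ^ b
        = ∑ j ∈ Finset.range (m + 1),
            if x = kp m j then
              cc n j * (((kp m j).1 : ℤ) : ℂ) ^ a * (((kp m j).2 : ℤ) : ℂ) ^ b
            else 0 := by
      intro x _
      rw [show μ x * (x.1 : ℂ) ^ a * (x.2 : ℂ) ^ b
          = (∑ j ∈ Finset.range (m + 1), if x = kp m j then cc n j else 0)
            * ((x.1 : ℂ) ^ a * (x.2 : ℂ) ^ b) by rw [hμ]; ring, Finset.sum_mul]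
      refine Finset.sum_congr rfl fun j _ => ?_
      split
      · rename_i he
        rw [he]; ring
      · rw [zero_mul]
    rw [Finset.sum_congr rfl hA1, Finset.sum_comm]
    have hB1 : ∀ j ∈ Finset.range (m + 1),
        (∑ x ∈ S, if x = kp m j then
            cc n j * (((kp m j).1 : ℤ) : ℂ) ^ a * (((kp m j).2 : ℤ) : ℂ) ^ b else 0)
        = cc n j * (((kp m j).1 : ℤ) : ℂ) ^ a * (((kp m j).2 : ℤ) : ℂ) ^ b := by
      intro j hj
      rw [Finset.sum_ite_eq' S (kp m j)]
      exact if_pos (Finset.mem_image_of_mem (kp m) hj)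
    rw [Finset.sum_congr rfl hB1]
    -- now reduce to T_eq_zero
    have key1 : ∀ j : ℕ, A ^ j * B ^ (m - j) + B ^ j * A ^ (m - j)
        = 2 * (((zg m j).re : ℤ) : ℂ) := by
      intro j
      rw [← toComplex_zg, ← toComplex_star_zg, sum_star]
    have key2 : ∀ j : ℕ, A ^ j * B ^ (m - j) - B ^ j * A ^ (m - j)
        = (2 * Complex.I) * (((zg m j).im : ℤ) : ℂ) := by
      intro j
      rw [← toComplex_zg, ← toComplex_star_zg, diff_star]
    have hT := T_eq_zero n a b hab
    have h2 : ∑ j ∈ Finset.range (m + 1),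
        cc n j * ((2 * (((zg m j).re : ℤ) : ℂ)) ^ a
          * ((2 * Complex.I) * (((zg m j).im : ℤ) : ℂ)) ^ b) = 0 := by
      rw [show m + 1 = 2 * n + 2 by omega, ← hT]
      refine Finset.sum_congr rfl fun j _ => ?_
      rw [← key1, ← key2]
    have h3 : (2 : ℂ) ^ a * (2 * Complex.I) ^ b
        * (∑ j ∈ Finset.range (m + 1),
            cc n j * (((kp m j).1 : ℤ) : ℂ) ^ a * (((kp m j).2 : ℤ) : ℂ) ^ b)
        = ∑ j ∈ Finset.range (m + 1),
            cc n j * ((2 * (((zg m j).re : ℤ) : ℂ)) ^ a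
              * ((2 * Complex.I) * (((zg m j).im : ℤ) : ℂ)) ^ b) := by
      rw [Finset.mul_sum]
      refine Finset.sum_congr rfl fun j _ => ?_
      rw [mul_pow, mul_pow, kp]
      ring
    have hD : (2 : ℂ) ^ a * (2 * Complex.I) ^ b ≠ 0 :=
      mul_ne_zero (pow_ne_zero _ two_ne_zero)
        (pow_ne_zero _ (mul_ne_zero two_ne_zero Complex.I_ne_zero))
    have := h3.trans h2
    exact (mul_eq_zero.mp this).resolve_left hD

end
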